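/- Let 𝓕 be a complete polyhedral fan in ℝ^n and let δ > 0. Then there exists d = (d_0, d_1, ..., d_{n−1}) ∈ ℝ^n_{>0} such that the quasi-toric differential inclusion given by 𝓕 and d is well-defined, and for every X ∈ ℝ^n the following holds: if C ∈ 𝓕 is a cone such that either (a) dim(C) = l ≤ n−1, dist(X, C) ≤ d_l, and dist(X, C') > d_{dim(C')} for every cone C' ∈ 𝓕 with dim(C') < l, or (b) dim(C) = n, X ∈ C, and dist(X, C') > d_{dim(C')} for every cone C' ∈ 𝓕 with dim(C') ≤ n−1, then F_{𝓕,δ}(X) ⊆ C^o, i.e., the toric differential inclusion given by 𝓕 and δ is embedded in the quasi-toric differential inclusion given by 𝓕 and d. -/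

import Mathlib

/-!
Two finitely generated cones `A`, `B` satisfy the error bound
`dist(x, A ∩ B) ≤ K (dist(x, A) + dist(x, B))`. Passing to coefficient vectors `(λ, μ) ≥ 0` of
the generators, this is Hoffman's bound for the cone `{z ≥ 0 | M z = 0}`, and Hoffman's bound
follows by projecting onto the solution cone: `x - proj x` lies in the polar of the cone cut out
by the constraints active at `proj x`, and on each of these finitely many closed cones the norm is
bounded by the residual, by compactness of the unit sphere.

Fix one `K ≥ 1` that works for all pairs of cones of the fan and put `d_j = (2K)^(n-j) δ`. A point
`d`-close to two cones is `2K d_{h+1} = d_h`-close to their intersection, a face of dimension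
`h`; this is well-definedness. Under (a) or (b), every cone `D` with `dist(X, D) ≤ δ` contains
`C`, for otherwise the lower-dimensional cone `C ∩ D` of the fan would be `d`-close to `X`. So
`C` lies in the intersection defining `F_{𝓕,δ}(X)`, and polarity reverses the inclusion.
-/

open scoped RealInnerProductSpace

/-- A (convex polyhedral) cone in `ℝ^n`: nonnegative combinations of finitely many vectors. -/
def IsPolyhedralCone {n : ℕ} (C : Set (EuclideanSpace ℝ (Fin n))) : Prop :=
  ∃ (k : ℕ) (v : Fin k → EuclideanSpace ℝ (Fin n)),
    C = {x | ∃ lam : Fin k → ℝ, (∀ i, 0 ≤ lam i) ∧ x = ∑ i, lam i • v i}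

/-- `F` is a face of the cone `C`. -/
def IsFaceOf {n : ℕ} (F C : Set (EuclideanSpace ℝ (Fin n))) : Prop :=
  F = C ∨ ∃ u : EuclideanSpace ℝ (Fin n),
    (∀ x ∈ C, ⟪u, x⟫ ≤ 0) ∧ F = C ∩ {x | ⟪u, x⟫ = 0}

/-- The dimension of a cone: the dimension of its linear span. -/
noncomputable def coneDim {n : ℕ} (C : Set (EuclideanSpace ℝ (Fin n))) : ℕ :=
  Module.finrank ℝ (Submodule.span ℝ C)

/-- A facet of `C` is a face of dimension `dim C - 1`. -/
def IsFacetOf {n : ℕ} (σ C : Set (EuclideanSpace ℝ (Fin n))) : Prop :=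
  IsFaceOf σ C ∧ coneDim σ + 1 = coneDim C

/-- The polar of a cone. -/
def polarCone {n : ℕ} (C : Set (EuclideanSpace ℝ (Fin n))) :
    Set (EuclideanSpace ℝ (Fin n)) :=
  {u | ∀ x ∈ C, ⟪u, x⟫ ≤ 0}

/-- A complete polyhedral fan in `ℝ^n`. -/
def IsCompleteFan {n : ℕ} (𝓕 : Set (Set (EuclideanSpace ℝ (Fin n)))) : Prop :=
  𝓕.Finite ∧ (∀ C ∈ 𝓕, IsPolyhedralCone C) ∧
    (∀ C ∈ 𝓕, ∀ F, IsFaceOf F C → F ∈ 𝓕) ∧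
    (∀ C ∈ 𝓕, ∀ C' ∈ 𝓕, IsFaceOf (C ∩ C') C ∧ IsFaceOf (C ∩ C') C') ∧
    ⋃₀ 𝓕 = Set.univ

/-- Right-hand side of the toric differential inclusion given by `𝓕` and `δ`. -/
noncomputable def toricRHS {n : ℕ} (𝓕 : Set (Set (EuclideanSpace ℝ (Fin n))))
    (δ : ℝ) (X : EuclideanSpace ℝ (Fin n)) : Set (EuclideanSpace ℝ (Fin n)) :=
  polarCone (⋂₀ {C | C ∈ 𝓕 ∧ Metric.infDist X C ≤ δ})

/-- The quasi-toric differential inclusion given by `𝓕` and `d` is well-defined. -/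
def QTDIWellDefined {n : ℕ} (𝓕 : Set (Set (EuclideanSpace ℝ (Fin n))))
    (d : Fin n → ℝ) : Prop :=
  ∀ C ∈ 𝓕, ∀ C' ∈ 𝓕, ∀ X : EuclideanSpace ℝ (Fin n),
    ∀ (hk : coneDim C < n) (hm : coneDim C' < n),
      Metric.infDist X C ≤ d ⟨coneDim C, hk⟩ →
      Metric.infDist X C' ≤ d ⟨coneDim C', hm⟩ →
      ∃ hh : coneDim (C ∩ C') < n,
        Metric.infDist X (C ∩ C') ≤ d ⟨coneDim (C ∩ C'), hh⟩

open Metric Set Filter Topology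

theorem eventually_norm_le_mul_of_isClosed_cone {E : Type*} [NormedAddCommGroup E]
    [NormedSpace ℝ E] [FiniteDimensional ℝ E] {U : Set E} (hU : IsClosed U)
    (hsmul : ∀ u ∈ U, ∀ c : ℝ, 0 < c → c • u ∈ U) {ρ : E → ℝ} (hρ : Continuous ρ)
    (hhom : ∀ (c : ℝ) (u : E), 0 ≤ c → ρ (c • u) = c * ρ u) (hpos : ∀ u ∈ U, u ≠ 0 → 0 < ρ u) :
    ∀ᶠ K in atTop, ∀ u ∈ U, ‖u‖ ≤ K * ρ u := by
  obtain ⟨m, hm, hmρ⟩ := ((isCompact_sphere (0 : E) 1).inter_left hU).exists_forall_le'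
    hρ.continuousOn (a := 0) fun u ⟨huU, hu⟩ => hpos u huU (ne_zero_of_mem_unit_sphere ⟨u, hu⟩)
  filter_upwards [eventually_ge_atTop m⁻¹] with K hK u hu
  rcases eq_or_ne u 0 with rfl | hu0
  · have hρ0 : ρ 0 = 0 := by simpa using hhom 0 0 le_rfl
    simp [hρ0]
  have hnorm : 0 < ‖u‖ := norm_pos_iff.mpr hu0
  have hunit := hmρ (‖u‖⁻¹ • u)
    ⟨hsmul u hu _ (inv_pos.mpr hnorm), by simp [norm_smul, hnorm.ne']⟩
  rw [hhom _ _ (inv_nonneg.mpr hnorm.le), le_inv_mul_iff₀ hnorm] at hunit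
  calc ‖u‖ ≤ m⁻¹ * ρ u := by rw [le_inv_mul_iff₀ hm]; linarith
    _ ≤ K * ρ u := by gcongr; exact (hpos u hu hu0).le

theorem Metric.le_infDist_add_infDist {α : Type*} [PseudoMetricSpace α] {x : α} {s t : Set α}
    (hs : s.Nonempty) (ht : t.Nonempty) {r : ℝ}
    (h : ∀ p ∈ s, ∀ q ∈ t, r ≤ dist x p + dist x q) : r ≤ infDist x s + infDist x t := by
  have hs' : ∀ q ∈ t, r - dist x q ≤ infDist x s := fun q hq =>
    (le_infDist hs).2 fun p hp => by linarith [h p hp q hq]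
  have ht' : r - infDist x s ≤ infDist x t := (le_infDist ht).2 fun q hq => by linarith [hs' q hq]
  linarith

section Hoffman

variable {E F : Type*} [NormedAddCommGroup E] [InnerProductSpace ℝ E] [NormedAddCommGroup F]
  [NormedSpace ℝ F] {ι : Type*} (ℓ : ι → E →L[ℝ] ℝ) (N : E →L[ℝ] F)

def solutionCone (I : Finset ι) : Set E := {y | (∀ i ∈ I, ℓ i y ≤ 0) ∧ N y = 0}

def linearResidual (I : Finset ι) (x : E) : ℝ := ∑ i ∈ I, max (ℓ i x) 0 + ‖N x‖

variable {ℓ N}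

theorem isClosed_solutionCone (I : Finset ι) : IsClosed (solutionCone ℓ N I) := by
  simp only [solutionCone, ofPred_and, ofPred_forall]
  exact (isClosed_biInter fun i _ => isClosed_le (ℓ i).continuous continuous_const).inter
    (isClosed_eq N.continuous continuous_const)

theorem convex_solutionCone (I : Finset ι) : Convex ℝ (solutionCone ℓ N I) := by
  rintro x ⟨hxℓ, hxN⟩ y ⟨hyℓ, hyN⟩ a b ha hb -
  refine ⟨fun i hi => ?_, by simp [hxN, hyN]⟩
  simp only [map_add, map_smul, smul_eq_mul]
  nlinarith [mul_nonpos_of_nonneg_of_nonpos ha (hxℓ i hi),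
    mul_nonpos_of_nonneg_of_nonpos hb (hyℓ i hi)]

theorem zero_mem_solutionCone (I : Finset ι) : (0 : E) ∈ solutionCone ℓ N I :=
  ⟨fun i _ => by simp, map_zero N⟩

theorem continuous_linearResidual (I : Finset ι) : Continuous (linearResidual ℓ N I) := by
  unfold linearResidual
  fun_prop

theorem linearResidual_smul (I : Finset ι) {c : ℝ} (hc : 0 ≤ c) (x : E) :
    linearResidual ℓ N I (c • x) = c * linearResidual ℓ N I x := by
  simp only [linearResidual, map_smul, smul_eq_mul, norm_smul, Real.norm_of_nonneg hc, mul_add,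
    Finset.mul_sum, mul_max_of_nonneg _ _ hc, mul_zero]

theorem linearResidual_pos {I : Finset ι} {u : E} (hu : ∀ y ∈ solutionCone ℓ N I, ⟪u, y⟫ ≤ 0)
    (hu0 : u ≠ 0) : 0 < linearResidual ℓ N I u := by
  by_contra! hρ
  rw [linearResidual] at hρ
  have hterms : ∀ i ∈ I, 0 ≤ max (ℓ i u) 0 := fun i _ => le_max_right _ _
  have hsum := Finset.sum_nonneg hterms
  have hNu : N u = 0 := norm_le_zero_iff.mp (by linarith)
  have hmax : ∑ i ∈ I, max (ℓ i u) 0 = 0 := by linarith [norm_nonneg (N u)]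
  have hself := hu u ⟨fun i hi => by
    simpa using (Finset.sum_eq_zero_iff_of_nonneg hterms).mp hmax i hi, hNu⟩
  exact hu0 (real_inner_self_nonpos.mp hself)

theorem inner_nonpos_of_mem_solutionCone_active {I : Finset ι} {q u : E}
    (hq : q ∈ solutionCone ℓ N I) (hu : ∀ y ∈ solutionCone ℓ N I, ⟪u, y - q⟫ ≤ 0) {y : E}
    (hy : y ∈ solutionCone ℓ N {i ∈ I | ℓ i q = 0}) : ⟪u, y⟫ ≤ 0 := by
  -- `q + ε • y` stays feasible for small `ε > 0`: the inactive constraints are strict at `q`.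
  have hmove : ∀ᶠ ε in 𝓝[>] (0 : ℝ), q + ε • y ∈ solutionCone ℓ N I := by
    refine (I.eventually_all.2 fun i hi => ?_).mono fun ε hε => ⟨hε, by simp [hq.2, hy.2]⟩
    rcases (hq.1 i hi).lt_or_eq with hlt | heq
    · have hcont : Continuous fun ε : ℝ => ℓ i (q + ε • y) := by fun_prop
      have := (hcont.tendsto 0).eventually (eventually_lt_nhds (by simpa using hlt))
      exact nhdsWithin_le_nhds (this.mono fun ε hε => hε.le)
    · filter_upwards [self_mem_nhdsWithin] with ε hε
      simp only [map_add, map_smul, smul_eq_mul, heq, zero_add]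
      exact mul_nonpos_of_nonneg_of_nonpos hε.out.le (hy.1 i (by simp [hi, heq]))
  obtain ⟨ε, hεP, hε⟩ := (hmove.and self_mem_nhdsWithin).exists
  have := hu _ hεP
  rw [add_sub_cancel_left, real_inner_smul_right] at this
  exact nonpos_of_mul_nonpos_right this hε

/-- Hoffman's error bound for a homogeneous system of linear inequalities and equations. -/
theorem eventually_exists_mem_solutionCone_norm_sub_le [FiniteDimensional ℝ E] (I₀ : Finset ι) :
    ∀ᶠ K in atTop, ∀ x, ∃ y ∈ solutionCone ℓ N I₀, ‖x - y‖ ≤ K * linearResidual ℓ N I₀ x := by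
  have hK : ∀ᶠ K in atTop, ∀ I ∈ I₀.powerset,
      ∀ u ∈ {u | ∀ y ∈ solutionCone ℓ N I, ⟪u, y⟫ ≤ 0}, ‖u‖ ≤ K * linearResidual ℓ N I u := by
    refine I₀.powerset.eventually_all.2 fun I _ => eventually_norm_le_mul_of_isClosed_cone ?_ ?_
      (continuous_linearResidual I) (fun c x hc => linearResidual_smul I hc x)
      fun u hu hu0 => linearResidual_pos hu hu0
    · simp only [ofPred_forall]
      exact isClosed_biInter fun y _ => isClosed_le (by fun_prop) continuous_const
    · intro u hu c hc y hy
      rw [real_inner_smul_left]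
      exact mul_nonpos_of_nonneg_of_nonpos hc.le (hu y hy)
  filter_upwards [hK, eventually_ge_atTop 0] with K hK hK0 x
  have hconv : Convex ℝ (solutionCone ℓ N I₀) := convex_solutionCone I₀
  obtain ⟨q, hq, hqx⟩ := exists_norm_eq_iInf_of_complete_convex ⟨0, zero_mem_solutionCone I₀⟩
    (isClosed_solutionCone I₀).isComplete hconv x
  have hproj := (norm_eq_iInf_iff_real_inner_le_zero hconv hq).mp hqx
  set I := {i ∈ I₀ | ℓ i q = 0}
  have hres : linearResidual ℓ N I (x - q) ≤ linearResidual ℓ N I₀ x := by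
    have hactive : ∑ i ∈ I, max (ℓ i (x - q)) 0 = ∑ i ∈ I, max (ℓ i x) 0 :=
      Finset.sum_congr rfl fun i hi => by simp [(Finset.mem_filter.mp hi).2]
    rw [linearResidual, linearResidual, hactive, map_sub, hq.2, sub_zero]
    exact add_le_add_left (Finset.sum_le_sum_of_subset_of_nonneg (Finset.filter_subset _ _)
      fun _ _ _ => le_max_right _ _) _
  refine ⟨q, hq, ?_⟩
  calc ‖x - q‖ ≤ K * linearResidual ℓ N I (x - q) :=
        hK I (Finset.mem_powerset.mpr (Finset.filter_subset _ _)) _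
          fun y hy => inner_nonpos_of_mem_solutionCone_active hq hproj hy
    _ ≤ K * linearResidual ℓ N I₀ x := by gcongr

end Hoffman

section ConicHull

variable {E : Type*} [NormedAddCommGroup E] [NormedSpace ℝ E] {ι κ : Type*} [Fintype ι]
  [Fintype κ]

def conicHull (v : ι → E) : Set E := {x | ∃ lam : ι → ℝ, (∀ i, 0 ≤ lam i) ∧ x = ∑ i, lam i • v i}

theorem zero_mem_conicHull (v : ι → E) : (0 : E) ∈ conicHull v :=
  ⟨0, fun _ => le_rfl, by simp⟩

theorem eventually_exists_mem_inter_norm_sub_le (v : ι → E) (w : κ → E) :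
    ∀ᶠ K in atTop, ∀ p ∈ conicHull v, ∀ q ∈ conicHull w,
      ∃ r ∈ conicHull v ∩ conicHull w, ‖p - r‖ ≤ K * ‖p - q‖ := by
  let comb (u : ι ⊕ κ → E) : EuclideanSpace ℝ (ι ⊕ κ) →L[ℝ] E := LinearMap.toContinuousLinearMap
    ((Fintype.linearCombination ℝ u).comp (WithLp.linearEquiv 2 ℝ _).toLinearMap)
  have hcomb (u : ι ⊕ κ → E) (z) : comb u z = ∑ i, z (.inl i) • u (.inl i) +
      ∑ j, z (.inr j) • u (.inr j) := by
    simp [comb, Fintype.linearCombination_apply, Fintype.sum_sum_type]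
  -- On coefficient vectors `z = (λ, μ)`: `V z = ∑ λ v` and `N z = ∑ λ v - ∑ μ w`.
  let V := comb (Sum.elim v 0)
  let N := comb (Sum.elim v (-w))
  let ℓ (s : ι ⊕ κ) : EuclideanSpace ℝ (ι ⊕ κ) →L[ℝ] ℝ := -EuclideanSpace.proj s
  obtain ⟨K₀, hK₀⟩ :=
    (eventually_exists_mem_solutionCone_norm_sub_le (ℓ := ℓ) (N := N) Finset.univ).exists
  filter_upwards [eventually_ge_atTop (‖V‖ * K₀)] with K hK
  rintro p ⟨lam, hlam, rfl⟩ q ⟨mu, hmu, rfl⟩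
  set z := WithLp.toLp 2 (Sum.elim lam mu)
  obtain ⟨y, ⟨hyℓ, hyN⟩, hy⟩ := hK₀ z
  have hy0 : ∀ s, 0 ≤ y s := fun s => by simpa [ℓ] using hyℓ s (Finset.mem_univ s)
  have hVz : V z = ∑ i, lam i • v i := by simp [V, hcomb, z]
  have hres : linearResidual ℓ N Finset.univ z = ‖∑ i, lam i • v i - ∑ j, mu j • w j‖ := by
    simp [linearResidual, ℓ, N, hcomb, z, Fintype.sum_sum_type, hlam, hmu, sub_eq_add_neg]
  refine ⟨V y, ⟨⟨fun i => y (.inl i), fun i => hy0 _, by simp [V, hcomb]⟩,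
    ⟨fun j => y (.inr j), fun j => hy0 _, ?_⟩⟩, ?_⟩
  · rw [hcomb, Pi.neg_def] at hyN
    simpa [V, hcomb, add_eq_zero_iff_eq_neg] using hyN
  · calc ‖∑ i, lam i • v i - V y‖ = ‖V (z - y)‖ := by rw [map_sub, hVz]
      _ ≤ ‖V‖ * (K₀ * linearResidual ℓ N Finset.univ z) := V.le_opNorm_of_le hy
      _ ≤ K * ‖∑ i, lam i • v i - ∑ j, mu j • w j‖ := by
        rw [hres, ← mul_assoc]
        gcongr

theorem eventually_infDist_inter_le (v : ι → E) (w : κ → E) :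
    ∀ᶠ K in atTop, ∀ x, infDist x (conicHull v ∩ conicHull w) ≤
      K * (infDist x (conicHull v) + infDist x (conicHull w)) := by
  obtain ⟨K₁, hK₁, hK₁0⟩ :=
    ((eventually_exists_mem_inter_norm_sub_le v w).and (eventually_ge_atTop 0)).exists
  filter_upwards [eventually_ge_atTop (1 + K₁)] with K hK x
  have hKpos : 0 < K := by linarith
  rw [← div_le_iff₀' hKpos]
  refine le_infDist_add_infDist ⟨0, zero_mem_conicHull v⟩ ⟨0, zero_mem_conicHull w⟩
    fun p hp q hq => ?_
  obtain ⟨r, hr, hpr⟩ := hK₁ p hp q hq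
  have hpq : ‖p - q‖ ≤ dist x p + dist x q := by
    rw [← dist_eq_norm, dist_comm x p]
    exact dist_triangle _ _ _
  have hxp : 0 ≤ dist x p := dist_nonneg
  have hxq : 0 ≤ dist x q := dist_nonneg
  rw [div_le_iff₀' hKpos]
  calc infDist x (conicHull v ∩ conicHull w) ≤ dist x r := infDist_le_dist_of_mem hr
    _ ≤ dist x p + ‖p - r‖ := by rw [← dist_eq_norm]; exact dist_triangle _ _ _
    _ ≤ dist x p + K₁ * (dist x p + dist x q) := by gcongr; exact hpr.trans (by gcongr)
    _ ≤ K * (dist x p + dist x q) := by nlinarith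

end ConicHull

section Fan

variable {n : ℕ}

theorem coneDim_mono {C D : Set (EuclideanSpace ℝ (Fin n))} (h : C ⊆ D) :
    coneDim C ≤ coneDim D :=
  Submodule.finrank_mono (Submodule.span_mono h)

theorem coneDim_le (C : Set (EuclideanSpace ℝ (Fin n))) : coneDim C ≤ n :=
  (Submodule.finrank_le _).trans finrank_euclideanSpace_fin.le

theorem IsFaceOf.coneDim_lt {F C : Set (EuclideanSpace ℝ (Fin n))} (hF : IsFaceOf F C)
    (hne : F ≠ C) : coneDim F < coneDim C := by
  obtain ⟨u, -, rfl⟩ := hF.resolve_left hne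
  obtain ⟨x, hxC, hx⟩ : ∃ x ∈ C, ⟪u, x⟫ ≠ 0 := by
    by_contra! h
    exact hne (inter_eq_left.2 h)
  refine Submodule.finrank_lt_finrank_of_lt
    ((Submodule.span_mono inter_subset_left).lt_of_ne fun heq => hx ?_)
  have hker : Submodule.span ℝ (C ∩ {x | ⟪u, x⟫ = 0}) ≤ LinearMap.ker (innerₗ _ u) :=
    Submodule.span_le.2 fun y hy => hy.2
  simpa using hker (heq ▸ Submodule.subset_span hxC)

theorem eventually_infDist_inter_le_of_finite {𝓕 : Set (Set (EuclideanSpace ℝ (Fin n)))}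
    (hfin : 𝓕.Finite) (hpoly : ∀ C ∈ 𝓕, IsPolyhedralCone C) :
    ∀ᶠ K in atTop, ∀ C ∈ 𝓕, ∀ C' ∈ 𝓕, ∀ x,
      infDist x (C ∩ C') ≤ K * (infDist x C + infDist x C') := by
  refine hfin.eventually_all.2 fun C hC => hfin.eventually_all.2 fun C' hC' => ?_
  obtain ⟨k, v, rfl⟩ := hpoly C hC
  obtain ⟨m, w, rfl⟩ := hpoly C' hC'
  exact eventually_infDist_inter_le v w

theorem infDist_inter_le_of_step {𝓕 : Set (Set (EuclideanSpace ℝ (Fin n)))} {K : ℝ}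
    {t : ℕ → ℝ} (hface : ∀ C ∈ 𝓕, ∀ C' ∈ 𝓕, IsFaceOf (C ∩ C') C ∧ IsFaceOf (C ∩ C') C')
    (hK : ∀ C ∈ 𝓕, ∀ C' ∈ 𝓕, ∀ x, infDist x (C ∩ C') ≤ K * (infDist x C + infDist x C'))
    (hK0 : 0 ≤ K) (ht : Antitone t) (hstep : ∀ j < n, 2 * K * t (j + 1) ≤ t j)
    {C C' : Set (EuclideanSpace ℝ (Fin n))} (hC : C ∈ 𝓕) (hC' : C' ∈ 𝓕)
    {X : EuclideanSpace ℝ (Fin n)} (h : infDist X C ≤ t (coneDim C))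
    (h' : infDist X C' ≤ t (coneDim C')) :
    infDist X (C ∩ C') ≤ t (coneDim (C ∩ C')) := by
  by_cases hCC : C ∩ C' = C
  · rwa [hCC]
  by_cases hC'C : C ∩ C' = C'
  · rwa [hC'C]
  have hlt := (hface C hC C' hC').1.coneDim_lt hCC
  have hlt' := (hface C hC C' hC').2.coneDim_lt hC'C
  calc infDist X (C ∩ C') ≤ K * (infDist X C + infDist X C') := hK C hC C' hC' X
    _ ≤ K * (t (coneDim (C ∩ C') + 1) + t (coneDim (C ∩ C') + 1)) := by
      gcongr
      exacts [h.trans (ht hlt), h'.trans (ht hlt')]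
    _ ≤ t (coneDim (C ∩ C')) := by
      linarith [hstep _ (hlt.trans_le (coneDim_le C))]

theorem subset_of_infDist_le_of_step {𝓕 : Set (Set (EuclideanSpace ℝ (Fin n)))} {K : ℝ}
    {t : ℕ → ℝ} (hclosed : ∀ C ∈ 𝓕, ∀ F, IsFaceOf F C → F ∈ 𝓕)
    (hface : ∀ C ∈ 𝓕, ∀ C' ∈ 𝓕, IsFaceOf (C ∩ C') C ∧ IsFaceOf (C ∩ C') C')
    (hK : ∀ C ∈ 𝓕, ∀ C' ∈ 𝓕, ∀ x, infDist x (C ∩ C') ≤ K * (infDist x C + infDist x C'))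
    (hK0 : 0 ≤ K) (ht : Antitone t) (hstep : ∀ j < n, 2 * K * t (j + 1) ≤ t j)
    {C D : Set (EuclideanSpace ℝ (Fin n))} (hC : C ∈ 𝓕) (hD : D ∈ 𝓕)
    {X : EuclideanSpace ℝ (Fin n)} (hXC : infDist X C ≤ t (coneDim C))
    (hfar : ∀ C' ∈ 𝓕, coneDim C' < coneDim C → t (coneDim C') < infDist X C')
    (hXD : infDist X D ≤ t (coneDim D)) : C ⊆ D := by
  by_contra hCD
  have hne : C ∩ D ≠ C := fun h => hCD (inter_eq_left.1 h)
  have hnear := infDist_inter_le_of_step hface hK hK0 ht hstep hC hD hXC hXD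
  have := hfar _ (hclosed C hC _ (hface C hC D hD).1) ((hface C hC D hD).1.coneDim_lt hne)
  linarith

end Fan

def quasiToricRadius (n : ℕ) (K δ : ℝ) (j : ℕ) : ℝ := (2 * K) ^ (n - j) * δ

section QuasiToricRadius

variable {n : ℕ} {K δ : ℝ}

theorem quasiToricRadius_antitone (hK : 1 ≤ 2 * K) (hδ : 0 ≤ δ) :
    Antitone (quasiToricRadius n K δ) := fun _ _ hij =>
  mul_le_mul_of_nonneg_right (pow_le_pow_right₀ hK (Nat.sub_le_sub_left hij n)) hδ

theorem two_mul_quasiToricRadius_succ {j : ℕ} (hj : j < n) :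
    2 * K * quasiToricRadius n K δ (j + 1) = quasiToricRadius n K δ j := by
  rw [quasiToricRadius, quasiToricRadius, show n - j = n - (j + 1) + 1 by omega, pow_succ]
  ring

theorem le_quasiToricRadius (hK : 1 ≤ 2 * K) (hδ : 0 ≤ δ) (j : ℕ) :
    δ ≤ quasiToricRadius n K δ j :=
  le_mul_of_one_le_left hδ (one_le_pow₀ hK)

theorem quasiToricRadius_pos (hK : 0 < K) (hδ : 0 < δ) (j : ℕ) :
    0 < quasiToricRadius n K δ j :=
  mul_pos (pow_pos (by linarith) _) hδ

end QuasiToricRadius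

/-- Every toric differential inclusion can be embedded into a
well-defined quasi-toric differential inclusion. -/
theorem toric_embeds_into_quasiToric {n : ℕ}
    (𝓕 : Set (Set (EuclideanSpace ℝ (Fin n)))) (h𝓕 : IsCompleteFan 𝓕)
    (δ : ℝ) (hδ : 0 < δ) :
    ∃ d : Fin n → ℝ, (∀ k, 0 < d k) ∧ QTDIWellDefined 𝓕 d ∧
      ∀ X : EuclideanSpace ℝ (Fin n), ∀ C ∈ 𝓕,
        ((∃ hl : coneDim C < n,
            Metric.infDist X C ≤ d ⟨coneDim C, hl⟩ ∧
            ∀ C' ∈ 𝓕, ∀ h' : coneDim C' < coneDim C,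
              d ⟨coneDim C', h'.trans hl⟩ < Metric.infDist X C') ∨
         (coneDim C = n ∧ X ∈ C ∧
            ∀ C' ∈ 𝓕, ∀ h' : coneDim C' < n,
              d ⟨coneDim C', h'⟩ < Metric.infDist X C')) →
        toricRHS 𝓕 δ X ⊆ polarCone C := by
  obtain ⟨hfin, hpoly, hclosed, hface, -⟩ := h𝓕
  obtain ⟨K, hK, hK1⟩ :=
    ((eventually_infDist_inter_le_of_finite hfin hpoly).and (eventually_ge_atTop 1)).exists
  set r := quasiToricRadius n K δ
  have hK2 : 1 ≤ 2 * K := by linarith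
  have hr := quasiToricRadius_antitone (n := n) hK2 hδ.le
  have hstep : ∀ j < n, 2 * K * r (j + 1) ≤ r j := fun j hj =>
    (two_mul_quasiToricRadius_succ hj).le
  have hr0 := quasiToricRadius_pos (n := n) (by linarith) hδ
  refine ⟨fun k => r k, fun k => hr0 k, fun C hC C' hC' X hk _ h h' =>
    ⟨(coneDim_mono inter_subset_left).trans_lt hk,
      infDist_inter_le_of_step hface hK (by linarith) hr hstep hC hC' h h'⟩, ?_⟩
  intro X C hC hcase u hu x hx
  obtain ⟨hXC, hfar⟩ : infDist X C ≤ r (coneDim C) ∧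
      ∀ C' ∈ 𝓕, coneDim C' < coneDim C → r (coneDim C') < infDist X C' := by
    rcases hcase with ⟨_, hXC, hfar⟩ | ⟨hdim, hXC, hfar⟩
    · exact ⟨hXC, fun C' hC' h' => hfar C' hC' h'⟩
    · exact ⟨(infDist_zero_of_mem hXC).trans_le (hr0 _).le,
        fun C' hC' h' => hfar C' hC' (h'.trans_eq hdim)⟩
  refine hu x (mem_sInter.2 fun D ⟨hD, hXD⟩ => ?_)
  exact subset_of_infDist_le_of_step hclosed hface hK (by linarith) hr hstep hC hD hXC hfar
    (hXD.trans (le_quasiToricRadius hK2 hδ.le _)) hx
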